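/- The E-closure operator satisfies the exchange property: if T₁ ∈ Cl_E(𝒯 ∪ {T₂}) \ Cl_E(𝒯), then T₂ ∈ Cl_E(𝒯 ∪ {T₁}). -/

import Mathlib

open FirstOrder

/-- The E-closure of a family of theories: the family itself together with all
maximal (complete) theories each of whose sentences belongs to infinitely many
members of the family (Proposition 2.2 of the paper). -/
def ClE {L : Language} (𝒯 : Set L.Theory) : Set L.Theory :=
  𝒯 ∪ {T | T.IsMaximal ∧ ∀ φ ∈ T, {T' ∈ 𝒯 | φ ∈ T'}.Infinite}

/-!
A sentence lying in infinitely many members of `𝒯 ∪ 𝒮`, with `𝒮` finite, lies in infinitely many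
members of `𝒯`; so adjoining finitely many theories enlarges the E-closure only by those theories.
Hence `T₁ ∈ Cl_E(𝒯 ∪ {T₂}) \ Cl_E(𝒯)` forces `T₁ = T₂`.
-/

section

variable {L : Language}

theorem subset_ClE (𝒯 : Set L.Theory) : 𝒯 ⊆ ClE 𝒯 :=
  Set.subset_union_left

theorem ClE_mono {𝒯 𝒮 : Set L.Theory} (h : 𝒯 ⊆ 𝒮) : ClE 𝒯 ⊆ ClE 𝒮 := by
  rintro T (hT | ⟨hmax, hinf⟩)
  · exact Or.inl (h hT)
  · exact Or.inr ⟨hmax, fun φ hφ => (hinf φ hφ).mono fun T' hT' => ⟨h hT'.1, hT'.2⟩⟩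

theorem ClE_union_of_finite (𝒯 : Set L.Theory) {𝒮 : Set L.Theory} (h𝒮 : 𝒮.Finite) :
    ClE (𝒯 ∪ 𝒮) = ClE 𝒯 ∪ 𝒮 := by
  refine subset_antisymm ?_
    (Set.union_subset (ClE_mono Set.subset_union_left)
      (Set.subset_union_right.trans (subset_ClE _)))
  rintro T ((hT | hT) | ⟨hmax, hinf⟩)
  · exact Or.inl (subset_ClE 𝒯 hT)
  · exact Or.inr hT
  · refine Or.inl (Or.inr ⟨hmax, fun φ hφ hfin => hinf φ hφ ?_⟩)
    refine (hfin.union h𝒮).subset ?_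
    rintro T' ⟨hT' | hT', hφT'⟩
    · exact Or.inl ⟨hT', hφT'⟩
    · exact Or.inr hT'

end

theorem ClE_exchange_general {L : Language} (𝒯 : Set L.Theory) (T₁ T₂ : L.Theory)
    (hmem : T₁ ∈ ClE (𝒯 ∪ {T₂}) \ ClE 𝒯) :
    T₂ ∈ ClE (𝒯 ∪ {T₁}) := by
  obtain ⟨hin, hout⟩ := hmem
  rw [ClE_union_of_finite 𝒯 (Set.finite_singleton T₂)] at hin
  obtain rfl : T₁ = T₂ := hin.resolve_left hout
  exact subset_ClE _ (Set.mem_union_right 𝒯 rfl)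

/-- Corollary 2.4 (Exchange property). -/
theorem ClE_exchange {L : Language} (𝒯 : Set L.Theory) (T₁ T₂ : L.Theory)
    (h : ∀ T ∈ 𝒯, T.IsMaximal) (h₁ : T₁.IsMaximal) (h₂ : T₂.IsMaximal)
    (hmem : T₁ ∈ ClE (𝒯 ∪ {T₂}) \ ClE 𝒯) :
    T₂ ∈ ClE (𝒯 ∪ {T₁}) :=
  ClE_exchange_general 𝒯 T₁ T₂ hmem
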